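/- Let K ≥ 1, K' ≥ 0 and λ > 0. Let f = h + conj(g) be a sense-preserving (K,K')-elliptic harmonic mapping on the unit disc 𝔻 with f(0) = 0, λ_f(0) = 1, and λ_f(z) ≤ λ for all z ∈ 𝔻. Set ρ₁ = 1/(1 + Kλ + √K'). Then for every z with |z| = ρ₁, |f(z)| ≥ ρ₁ + (Kλ + √K')(ρ₁ + ln(1 − ρ₁)). -/

import Mathlib

/-!
Put `a = |h'|` and `b = |g'|`. Ellipticity says `(K + 1) b ≤ (K - 1) a + √K'`, i.e.
`a + b ≤ K (a - b) + √K' ≤ Kλ + √K' =: c` on the whole disc. Cauchy's estimates for the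
derivative of `ψ = h + e g` (`|e| = 1`) bound its Taylor coefficients by `|aₙ| ≤ c / n`, so
`|ψ(z) - ψ(0) - ψ'(0) z| ≤ c (-|z| - log (1 - |z|))`; choosing `e` to align the two Taylor
remainders of `h` and `g` bounds the sum of their moduli by the same quantity. Finally
`|h'(0) z + conj (g'(0) z)| ≥ ||h'(0)| - |g'(0)|| |z| = ρ₁` on `|z| = ρ₁`.
-/

open Complex Metric Filter Topology

section CauchyEstimates

variable {E : Type*} [NormedAddCommGroup E] [NormedSpace ℂ E] [CompleteSpace E]

theorem norm_iteratedDeriv_le_of_forall_mem_ball_norm_le {f : ℂ → E} {c : ℂ} {R C : ℝ}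
    (n : ℕ) (hR : 0 < R) (hf : DifferentiableOn ℂ f (ball c R))
    (hC : ∀ w ∈ ball c R, ‖f w‖ ≤ C) :
    ‖iteratedDeriv n f c‖ ≤ n.factorial * C / R ^ n := by
  have hr : ∀ r ∈ Set.Ioo 0 R, ‖iteratedDeriv n f c‖ * r ^ n ≤ n.factorial * C := by
    rintro r ⟨hr0, hrR⟩
    have := norm_iteratedDeriv_le_of_forall_mem_sphere_norm_le n hr0
      ((hf.mono (closedBall_subset_ball hrR)).diffContOnCl_ball le_rfl)
      fun w hw ↦ hC w (sphere_subset_closedBall.trans (closedBall_subset_ball hrR) hw)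
    rwa [le_div_iff₀ (by positivity)] at this
  rw [le_div_iff₀ (by positivity)]
  have := right_nhdsWithin_Ioo_neBot hR
  have hlim : Tendsto (fun r ↦ ‖iteratedDeriv n f c‖ * r ^ n) (𝓝[Set.Ioo 0 R] R)
      (𝓝 (‖iteratedDeriv n f c‖ * R ^ n)) :=
    ((continuous_const.mul (continuous_pow n)).tendsto R).mono_left nhdsWithin_le_nhds
  exact le_of_tendsto hlim (eventually_nhdsWithin_of_forall hr)

theorem norm_sub_sub_smul_deriv_le_of_norm_deriv_le {ψ : ℂ → E} {C : ℝ}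
    (hψ : DifferentiableOn ℂ ψ (ball 0 1)) (hC : ∀ w ∈ ball (0 : ℂ) 1, ‖deriv ψ w‖ ≤ C)
    {z : ℂ} (hz : ‖z‖ < 1) :
    ‖ψ z - ψ 0 - z • deriv ψ 0‖ ≤ C * (-‖z‖ - Real.log (1 - ‖z‖)) := by
  have hcoeff (n : ℕ) : ‖iteratedDeriv (n + 1) ψ 0‖ ≤ n.factorial * C := by
    simpa [iteratedDeriv_succ'] using
      norm_iteratedDeriv_le_of_forall_mem_ball_norm_le n one_pos (hψ.deriv isOpen_ball) hC
  have htaylor := hasSum_taylorSeries_on_ball hψ (mem_ball_zero_iff.2 hz)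
  rw [← hasSum_nat_add_iff' 2] at htaylor
  simp only [sub_zero, Finset.sum_range_succ, Finset.range_one, Finset.sum_singleton,
    Nat.factorial_zero, Nat.cast_one, inv_one, pow_zero, iteratedDeriv_zero, one_smul,
    Nat.factorial_one, pow_one, iteratedDeriv_one] at htaylor
  have hlog := Real.hasSum_pow_div_log_of_abs_lt_one (x := ‖z‖) (by simpa using hz)
  rw [← hasSum_nat_add_iff' 1] at hlog
  simp only [Nat.cast_add, Nat.cast_one, Finset.range_one, Finset.sum_singleton, zero_add,
    pow_one, CharP.cast_eq_zero, div_one] at hlog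
  rw [sub_sub, show -‖z‖ - Real.log (1 - ‖z‖) = -Real.log (1 - ‖z‖) - ‖z‖ by ring]
  refine htaylor.norm_le_of_bounded (hlog.mul_left C) fun n ↦ ?_
  calc ‖((n + 2).factorial : ℂ)⁻¹ • z ^ (n + 2) • iteratedDeriv (n + 2) ψ 0‖
      = ‖z‖ ^ (n + 2) * ‖iteratedDeriv (n + 1 + 1) ψ 0‖ / (n + 2).factorial := by
        rw [norm_smul, norm_smul, norm_inv, norm_pow, Complex.norm_natCast]; ring
    _ ≤ ‖z‖ ^ (n + 2) * ((n + 1).factorial * C) / (n + 2).factorial := by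
        gcongr; exact hcoeff (n + 1)
    _ = C * (‖z‖ ^ (n + 1 + 1) / (n + 1 + 1)) := by
        rw [Nat.factorial_succ (n + 1)]; push_cast; field_simp

end CauchyEstimates

theorem Complex.exists_norm_eq_one_norm_add_mul_eq (u v : ℂ) :
    ∃ e : ℂ, ‖e‖ = 1 ∧ ‖u + e * v‖ = ‖u‖ + ‖v‖ := by
  refine ⟨exp ((arg u - arg v : ℝ) * I), norm_exp_ofReal_mul_I _, ?_⟩
  have hrot : exp ((arg u - arg v : ℝ) * I) * v = ‖v‖ * exp (arg u * I) :=
    calc exp ((arg u - arg v : ℝ) * I) * v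
        = exp (arg u * I) / exp (arg v * I) * (‖v‖ * exp (arg v * I)) := by
          rw [norm_mul_exp_arg_mul_I, ofReal_sub, sub_mul, exp_sub]
      _ = ‖v‖ * exp (arg u * I) := by field_simp
  rw [hrot]
  nth_rewrite 1 [← norm_mul_exp_arg_mul_I u]
  rw [← add_mul, norm_mul, norm_exp_ofReal_mul_I, mul_one, ← ofReal_add, norm_real,
    Real.norm_of_nonneg (by positivity)]

theorem norm_sub_sub_mul_deriv_add_norm_sub_sub_mul_deriv_le {h g : ℂ → ℂ} {C : ℝ}
    (hh : DifferentiableOn ℂ h (ball 0 1)) (hg : DifferentiableOn ℂ g (ball 0 1))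
    (hC : ∀ w ∈ ball (0 : ℂ) 1, ‖deriv h w‖ + ‖deriv g w‖ ≤ C) {z : ℂ} (hz : ‖z‖ < 1) :
    ‖h z - h 0 - z * deriv h 0‖ + ‖g z - g 0 - z * deriv g 0‖
      ≤ C * (-‖z‖ - Real.log (1 - ‖z‖)) := by
  obtain ⟨e, he, hsum⟩ := exists_norm_eq_one_norm_add_mul_eq
    (h z - h 0 - z * deriv h 0) (g z - g 0 - z * deriv g 0)
  have hψ : DifferentiableOn ℂ (fun w ↦ h w + e * g w) (ball 0 1) := hh.add (hg.const_mul e)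
  have hderiv : ∀ w ∈ ball (0 : ℂ) 1,
      deriv (fun w ↦ h w + e * g w) w = deriv h w + e * deriv g w := fun w hw ↦ by
    have hw := isOpen_ball.mem_nhds hw
    rw [deriv_fun_add (hh.differentiableAt hw) ((hg.differentiableAt hw).const_mul e),
      deriv_const_mul e (hg.differentiableAt hw)]
  have hbound : ∀ w ∈ ball (0 : ℂ) 1, ‖deriv (fun w ↦ h w + e * g w) w‖ ≤ C := fun w hw ↦
    calc ‖deriv (fun w ↦ h w + e * g w) w‖
        ≤ ‖deriv h w‖ + ‖e * deriv g w‖ := by rw [hderiv w hw]; exact norm_add_le _ _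
      _ ≤ C := by rw [norm_mul, he, one_mul]; exact hC w hw
  calc _ = ‖h z - h 0 - z * deriv h 0 + e * (g z - g 0 - z * deriv g 0)‖ := hsum.symm
    _ = ‖(h z + e * g z) - (h 0 + e * g 0) - z • deriv (fun w ↦ h w + e * g w) 0‖ := by
        rw [hderiv 0 (mem_ball_self one_pos), smul_eq_mul]; congr 1; ring
    _ ≤ _ := norm_sub_sub_smul_deriv_le_of_norm_deriv_le hψ hbound hz

theorem Complex.mul_abs_norm_sub_norm_le_norm_mul_add_conj_mul (z a b : ℂ) :
    ‖z‖ * |‖a‖ - ‖b‖| ≤ ‖z * a + starRingEnd ℂ (z * b)‖ :=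
  calc ‖z‖ * |‖a‖ - ‖b‖| = |‖z * a‖ - ‖starRingEnd ℂ (z * b)‖| := by
        rw [norm_conj, norm_mul, norm_mul, ← mul_sub, abs_mul, abs_norm]
    _ ≤ ‖z * a + starRingEnd ℂ (z * b)‖ := by
        simpa only [norm_neg, sub_neg_eq_add] using
          abs_norm_sub_norm_le (z * a) (-starRingEnd ℂ (z * b))

theorem add_le_mul_add_of_le_elliptic {a b K lam s : ℝ} (hK : 0 ≤ K)
    (hell : b ≤ (K - 1) / (K + 1) * a + s / (K + 1)) (hlam : |a - b| ≤ lam) :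
    a + b ≤ K * lam + s := by
  rw [div_mul_eq_mul_div, ← add_div, le_div_iff₀ (by linarith)] at hell
  calc a + b ≤ K * (a - b) + s := by linarith
    _ ≤ K * lam + s := by gcongr; exact (le_abs_self _).trans hlam

theorem modulus_lower_bound_elliptic_general
    (K K' lam : ℝ) (hK : 1 ≤ K) (hlam : 0 < lam)
    (h g f : ℂ → ℂ)
    (hf : ∀ z ∈ ball (0:ℂ) 1, f z = h z + (starRingEnd ℂ) (g z))
    (hh : DifferentiableOn ℂ h (ball (0:ℂ) 1))
    (hg : DifferentiableOn ℂ g (ball (0:ℂ) 1))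
    (hell : ∀ z ∈ ball (0:ℂ) 1,
      ‖deriv g z‖ ≤ ((K - 1) / (K + 1)) * ‖deriv h z‖
        + Real.sqrt K' / (K + 1))
    (hf0 : f 0 = 0)
    (hlam0 : |‖deriv h 0‖ - ‖deriv g 0‖| = 1)
    (hlamf : ∀ z ∈ ball (0:ℂ) 1,
      |‖deriv h z‖ - ‖deriv g z‖| ≤ lam) :
    ∀ z : ℂ, ‖z‖ = 1 / (1 + K * lam + Real.sqrt K') →
      1 / (1 + K * lam + Real.sqrt K')
          + (K * lam + Real.sqrt K')
            * (1 / (1 + K * lam + Real.sqrt K')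
              + Real.log (1 - 1 / (1 + K * lam + Real.sqrt K')))
        ≤ ‖f z‖ := by
  intro z hz
  set ρ := 1 / (1 + K * lam + Real.sqrt K')
  have hKlam : 0 < K * lam := mul_pos (by linarith) hlam
  have hz1 : ‖z‖ < 1 := by
    rw [hz, div_lt_one (by positivity)]; linarith [Real.sqrt_nonneg K']
  have hdecomp : f z = (z * deriv h 0 + starRingEnd ℂ (z * deriv g 0))
      + ((h z - h 0 - z * deriv h 0) + starRingEnd ℂ (g z - g 0 - z * deriv g 0)) := by
    have h0 : h 0 + starRingEnd ℂ (g 0) = 0 := by rw [← hf 0 (mem_ball_self one_pos), hf0]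
    rw [hf z (mem_ball_zero_iff.2 hz1), map_sub, map_sub]
    linear_combination h0
  have hrem := norm_sub_sub_mul_deriv_add_norm_sub_sub_mul_deriv_le hh hg
    (fun w hw ↦ add_le_mul_add_of_le_elliptic (by linarith) (hell w hw) (hlamf w hw)) hz1
  set L := z * deriv h 0 + starRingEnd ℂ (z * deriv g 0)
  set Rh := h z - h 0 - z * deriv h 0
  set Rg := g z - g 0 - z * deriv g 0
  have hlin : ρ ≤ ‖L‖ := by
    simpa only [hz, hlam0, mul_one] using
      mul_abs_norm_sub_norm_le_norm_mul_add_conj_mul z (deriv h 0) (deriv g 0)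
  calc _ ≤ ‖L‖ - (‖Rh‖ + ‖Rg‖) := by rw [hz] at hrem; linarith
    _ ≤ ‖L‖ - ‖Rh + starRingEnd ℂ Rg‖ := by
        gcongr; exact (norm_add_le _ _).trans_eq (by rw [norm_conj])
    _ ≤ ‖f z‖ := hdecomp ▸ norm_sub_le_norm_add _ _

/-- Lower bound for |f(z)| on the circle |z| = ρ₁ for (K,K')-elliptic harmonic
mappings: |f(z)| ≥ ρ₁ + (Kλ + √K')(ρ₁ + ln(1 − ρ₁)). -/
theorem modulus_lower_bound_elliptic
    (K K' lam : ℝ) (hK : 1 ≤ K) (hK' : 0 ≤ K') (hlam : 0 < lam)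
    (h g f : ℂ → ℂ)
    (hf : ∀ z ∈ ball (0:ℂ) 1, f z = h z + (starRingEnd ℂ) (g z))
    (hh : DifferentiableOn ℂ h (ball (0:ℂ) 1))
    (hg : DifferentiableOn ℂ g (ball (0:ℂ) 1))
    (hsp : ∀ z ∈ ball (0:ℂ) 1,
      0 < ‖deriv h z‖ ^ 2 - ‖deriv g z‖ ^ 2)
    (hell : ∀ z ∈ ball (0:ℂ) 1,
      ‖deriv g z‖ ≤ ((K - 1) / (K + 1)) * ‖deriv h z‖
        + Real.sqrt K' / (K + 1))
    (hf0 : f 0 = 0)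
    (hlam0 : |‖deriv h 0‖ - ‖deriv g 0‖| = 1)
    (hlamf : ∀ z ∈ ball (0:ℂ) 1,
      |‖deriv h z‖ - ‖deriv g z‖| ≤ lam) :
    ∀ z : ℂ, ‖z‖ = 1 / (1 + K * lam + Real.sqrt K') →
      1 / (1 + K * lam + Real.sqrt K')
          + (K * lam + Real.sqrt K')
            * (1 / (1 + K * lam + Real.sqrt K')
              + Real.log (1 - 1 / (1 + K * lam + Real.sqrt K')))
        ≤ ‖f z‖ :=
  modulus_lower_bound_elliptic_general K K' lam hK hlam h g f hf hh hg hell hf0 hlam0 hlamf
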